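/- arXiv:1308.3790 — 3 statements merged into one kernel-verified Lean document; each statement's English description precedes it below -/
import Mathlib

section
/- Let U and V_n (n ∈ ℕ) be pairwise non-isomorphic selective ultrafilters on ℕ. For every function f : ℕ×ℕ → ℕ there is a set X ∈ U-∑_n V_n such that the restriction of f to X is either (i) a constant function, or (ii) equal to g ∘ π₁ for some one-to-one g : ℕ → ℕ, or (iii) a one-to-one function. -/
/-- The `U`-indexed sum of the ultrafilters `V n`: a set `X ⊆ ℕ × ℕ` belongs to the sum
iff `{n | X(n) ∈ V n} ∈ U`, where `X(n)` is the `n`-th vertical section of `X`. -/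
def sumUF (U : Ultrafilter ℕ) (V : ℕ → Ultrafilter ℕ) : Ultrafilter (ℕ × ℕ) :=
  U.bind fun n => (V n).map fun m => (n, m)

/-- `U` is selective: for every `f : ℕ → ℕ` there is `A ∈ U` on which `f` is
one-to-one or constant. -/
def IsSelective (U : Ultrafilter ℕ) : Prop :=
  ∀ f : ℕ → ℕ, ∃ A ∈ U, Set.InjOn f A ∨ ∃ c, ∀ a ∈ A, f a = c

/-- Two ultrafilters on ℕ are (RK-)isomorphic iff a bijection of ℕ carries one to the other. -/
def RKIso (U V : Ultrafilter ℕ) : Prop :=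
  ∃ e : ℕ ≃ ℕ, Ultrafilter.map (⇑e) U = V

/-!
Shrink each set of `V n` so that every section `f (n, ·)` is injective or constant on it.

If `U`-almost all sections are constant, with value `c n`, selectivity of `U` makes `c` constant
or injective on a set of `U`, and an injective `c` agrees `U`-almost everywhere with a bijection
of `ℕ`; this gives (i) or (ii).

If `U`-almost all sections are injective, the image ultrafilters `W n` of `V n` under `f (n, ·)`
are isomorphic to the `V n`, hence pairwise distinct. Only one of them can equal their `U`-limit,
so the others are separated from it by sets `C n ∈ W n`; the diagonalization property of the
selective ultrafilter `U` then lets us shrink the `C n` to pairwise disjoint sets `E n ∈ W n` for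
`n` in a set of `U`, and `f` is injective on the pairs `(n, m)` with `f (n, m) ∈ E n`.
-/

open Set Filter Function

theorem RKIso.symm {U V : Ultrafilter ℕ} : RKIso U V → RKIso V U := by
  rintro ⟨e, rfl⟩
  refine ⟨e.symm, ?_⟩
  rw [Ultrafilter.map_map, e.symm_comp_self, Ultrafilter.map_id]

theorem RKIso.trans {U V W : Ultrafilter ℕ} : RKIso U V → RKIso V W → RKIso U W := by
  rintro ⟨e, rfl⟩ ⟨e', rfl⟩
  exact ⟨e.trans e', by rw [Ultrafilter.map_map]; rfl⟩

theorem Ultrafilter.exists_mem_infinite_compl (V : Ultrafilter ℕ) : ∃ P ∈ V, Pᶜ.Infinite := by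
  have hodd : {n : ℕ | ¬Even n}.Infinite :=
    infinite_of_forall_exists_gt fun a => ⟨2 * a + 1, by simp [parity_simps], by omega⟩
  rcases V.em Even with h | h
  · exact ⟨_, h, by simpa [compl_ofPred] using hodd⟩
  · refine ⟨_, h, ?_⟩
    simpa [compl_ofPred] using
      infinite_of_forall_exists_gt fun a => ⟨2 * a + 2, by simp [parity_simps], by omega⟩

theorem Ultrafilter.exists_equiv_eventuallyEq (V : Ultrafilter ℕ) {A : Set ℕ} (hA : A ∈ V)
    {g : ℕ → ℕ} (hg : InjOn g A) : ∃ e : ℕ ≃ ℕ, ∀ᶠ n in V, e n = g n := by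
  obtain ⟨P, hPV, hP⟩ := V.exists_mem_infinite_compl
  obtain ⟨Q, hQV, hQ⟩ := (V.map g).exists_mem_infinite_compl
  -- shrinking `A` to `A'` makes the complements of `A'` and of its image infinite, so the
  -- bijection `A' ≃ g '' A'` extends to all of `ℕ`
  set A' := A ∩ P ∩ g ⁻¹' Q
  have hA'V : A' ∈ V := inter_mem (inter_mem hA hPV) hQV
  let g' : A' ↪ ℕ := ⟨A'.domRestrict g, (injOn_iff_injective.1 (hg.mono fun _ h => h.1.1))⟩
  have hcompl : Nonempty (↥A'ᶜ ≃ ↥(range g')ᶜ) := by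
    have : Infinite ↥A'ᶜ := (hP.mono (compl_subset_compl.2 fun _ h => h.1.2)).to_subtype
    have : Infinite ↥(range g')ᶜ :=
      (hQ.mono (compl_subset_compl.2 <| range_subset_iff.2 fun x => x.2.2)).to_subtype
    exact nonempty_equiv_of_countable
  obtain ⟨e, he⟩ := Cardinal.extend_function g' hcompl
  exact ⟨e, mem_of_superset hA'V fun n hn => he ⟨n, hn⟩⟩

theorem Ultrafilter.rkIso_map_of_injOn (V : Ultrafilter ℕ) {A : Set ℕ} (hA : A ∈ V)
    {g : ℕ → ℕ} (hg : InjOn g A) : RKIso V (V.map g) := by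
  obtain ⟨e, he⟩ := V.exists_equiv_eventuallyEq hA hg
  exact ⟨e, Ultrafilter.coe_injective (Filter.map_congr he)⟩

namespace IsSelective

variable {U : Ultrafilter ℕ}

/-- Selective ultrafilters are Q-points. -/
theorem exists_sparse (hU : IsSelective U) (hU' : (U : Filter ℕ) ≤ cofinite) (F : ℕ → ℕ) :
    ∃ B ∈ U, ∀ m ∈ B, ∀ n ∈ B, m < n → F m < n := by
  let a : ℕ → ℕ := fun j => Nat.rec 0 (fun _ x => x + 1 + ∑ k ∈ Finset.range x, F k) j
  have ha_succ : ∀ j, a (j + 1) = a j + 1 + ∑ k ∈ Finset.range (a j), F k := fun _ => rfl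
  have ha : StrictMono a := strictMono_nat_of_lt_succ fun j => by rw [ha_succ]; omega
  have hF : ∀ j, ∀ m < a j, F m < a (j + 1) := fun j m hm => by
    have := Finset.single_le_sum (fun k _ => Nat.zero_le (F k)) (Finset.mem_range.2 hm)
    rw [ha_succ]; omega
  -- `idx k` is the index of the block `[a j, a (j + 1))` containing `k`
  have hex : ∀ k, ∃ j, k < a (j + 1) := fun k => ⟨k, Nat.lt_succ_self k |>.trans_le ha.le_apply⟩
  let idx k := Nat.find (hex k)
  have hidx : ∀ k j, idx k ≤ j ↔ k < a (j + 1) := fun k j => by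
    simp only [idx, Nat.find_le_iff]
    exact ⟨fun ⟨i, hi, hk⟩ => hk.trans_le (ha.monotone (by omega : i + 1 ≤ j + 1)), fun h => ⟨j, le_rfl, h⟩⟩
  obtain ⟨B₁, hB₁, hinj⟩ : ∃ B ∈ U, InjOn idx B := by
    obtain ⟨B, hB, hinj | ⟨c, hc⟩⟩ := hU idx
    · exact ⟨B, hB, hinj⟩
    · have hfin : B.Finite := (finite_Iio (a (c + 1))).subset fun k hk => (hidx k c).1 (hc k hk).le
      exact absurd hB (Ultrafilter.compl_mem_iff_notMem.1 (hU' hfin.compl_mem_cofinite))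
  obtain ⟨B₂, hB₂, hpar⟩ : ∃ B ∈ U, ∀ m ∈ B, ∀ n ∈ B, idx m % 2 = idx n % 2 := by
    rcases U.em (fun k => idx k % 2 = 0) with h | h
    · exact ⟨_, h, fun m hm n hn => (hm : idx m % 2 = 0).trans (hn : idx n % 2 = 0).symm⟩
    · exact ⟨_, h, fun m (hm : ¬idx m % 2 = 0) n (hn : ¬idx n % 2 = 0) => by omega⟩
  refine ⟨B₁ ∩ B₂, inter_mem hB₁ hB₂, fun m hm n hn hmn => ?_⟩
  have hle : idx m ≤ idx n := (hidx m _).2 (hmn.trans ((hidx n _).1 le_rfl))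
  have hne : idx m ≠ idx n := fun h => hmn.ne (hinj hm.1 hn.1 h)
  -- blocks of the same parity are never adjacent
  have hn_ge : a (idx m + 2) ≤ n := not_lt.1 fun h => by
    have := (hidx n (idx m + 1)).2 h
    have := hpar m hm.2 n hn.2
    omega
  exact (hF (idx m + 1) m ((hidx m _).1 le_rfl)).trans_le hn_ge

theorem exists_diagonal (hU : IsSelective U) (hU' : (U : Filter ℕ) ≤ cofinite)
    (T : ℕ → Set ℕ) (hT : ∀ m, T m ∈ U) :
    ∃ B ∈ U, ∀ m ∈ B, ∀ n ∈ B, m < n → n ∈ T m := by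
  classical
  set T' : ℕ → Set ℕ := fun m => (⋂ k ∈ Iic m, T k) ∩ Ioi m
  have hT'U : ∀ m, T' m ∈ U := fun m =>
    inter_mem ((biInter_mem (finite_Iic m)).2 fun k _ => hT k)
      (by simpa using hU' (finite_Iic m).compl_mem_cofinite)
  have hT'anti : Antitone T' := fun m m' h k hk =>
    ⟨mem_iInter₂.2 fun i hi => mem_iInter₂.1 hk.1 i (le_trans hi h), lt_of_le_of_lt h hk.2⟩
  have hex : ∀ k, ∃ m, k ∉ T' m := fun k => ⟨k, fun hk => lt_irrefl k hk.2⟩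
  let h k := Nat.find (hex k)
  have hlt : ∀ k m, m < h k ↔ k ∈ T' m := fun k m => by
    simp only [h, Nat.lt_find_iff, not_not]
    exact ⟨fun H => H m le_rfl, fun hk i hi => hT'anti hi hk⟩
  obtain ⟨B₀, hB₀, hinj⟩ : ∃ B ∈ U, InjOn h B := by
    obtain ⟨B, hB, hinj | ⟨c, hc⟩⟩ := hU h
    · exact ⟨B, hB, hinj⟩
    · obtain ⟨k, hkB, hk⟩ := U.nonempty_of_mem (inter_mem hB (hT'U c))
      exact absurd ((hlt k c).2 hk) (by rw [hc k hkB]; exact lt_irrefl c)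
  have hbound : ∀ b, ∃ N, ∀ k ∈ B₀, h k ≤ b → k ≤ N := fun b => by
    have : (B₀ ∩ h ⁻¹' Iic b).Finite := Finite.of_finite_image
      ((finite_Iic b).subset (image_subset_iff.2 fun _ hk => hk.2)) (hinj.mono inter_subset_left)
    obtain ⟨N, hN⟩ := this.bddAbove
    exact ⟨N, fun k hk hkb => hN ⟨hk, hkb⟩⟩
  choose F hF using hbound
  obtain ⟨B₁, hB₁, hsparse⟩ := hU.exists_sparse hU' F
  refine ⟨B₀ ∩ B₁, inter_mem hB₀ hB₁, fun m hm n hn hmn => ?_⟩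
  have : m < h n := not_le.1 fun hle => (hsparse m hm.2 n hn.2 hmn).not_ge (hF m n hn.1 hle)
  exact mem_iInter₂.1 ((hlt n m).1 this).1 m (mem_Iic.2 le_rfl)

end IsSelective

theorem IsSelective.exists_pairwiseDisjoint {U : Ultrafilter ℕ} (hU : IsSelective U)
    (W : ℕ → Ultrafilter ℕ) {S : Set ℕ} (hS : S ∈ U) (hW : InjOn W S) :
    ∃ G ∈ U, ∃ E : ℕ → Set ℕ, (∀ n ∈ G, E n ∈ W n) ∧ G.PairwiseDisjoint E := by
  rcases U.le_cofinite_or_eq_pure with hU' | ⟨a, rfl⟩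
  swap
  · exact ⟨{a}, rfl, fun _ => univ, fun _ _ => univ_mem, pairwiseDisjoint_singleton _ _⟩
  set L := U.bind W
  -- `W` is injective on `S`, so it meets its `U`-limit `L` at most once
  have hL : {n | W n ≠ L} ∈ U := by
    have hfin : (S ∩ {n | W n = L}).Finite :=
      Subsingleton.finite fun m hm n hn => hW hm.1 hn.1 (hm.2.trans hn.2.symm)
    have := Ultrafilter.compl_mem_iff_notMem.1 (hU' hfin.compl_mem_cofinite)
    exact Ultrafilter.compl_mem_iff_notMem.2 fun h => this (inter_mem hS h)
  have hC : ∀ n, ∃ C, C ∉ L ∧ (W n ≠ L → C ∈ W n) := fun n => by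
    by_cases hn : W n = L
    · exact ⟨∅, L.empty_notMem, fun h => absurd hn h⟩
    · obtain ⟨C, hCW, hCL⟩ := Filter.not_le.1 fun h => hn (Ultrafilter.coe_le_coe.1 h).symm
      exact ⟨C, hCL, fun _ => hCW⟩
  choose C hCL hCW using hC
  obtain ⟨B, hB, hdiag⟩ := hU.exists_diagonal hU' (fun m => {n | C m ∉ W n})
    fun m => Ultrafilter.compl_mem_iff_notMem.2 (hCL m)
  set G := B ∩ {n | W n ≠ L}
  set E : ℕ → Set ℕ := fun n => C n \ ⋃ m ∈ G ∩ Iio n, C m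
  have hE : ∀ m ∈ G, ∀ n, m < n → Disjoint (E m) (E n) := fun m hm n hmn =>
    disjoint_left.2 fun _ hxm hxn => hxn.2 (mem_biUnion ⟨hm, hmn⟩ hxm.1)
  refine ⟨G, inter_mem hB hL, E, fun n hn => ?_, fun m hm n hn hne => ?_⟩
  · have : (⋃ m ∈ G ∩ Iio n, C m) ∉ W n := by
      rw [Ultrafilter.finite_biUnion_mem_iff ((finite_Iio n).inter_of_right G)]
      rintro ⟨m, ⟨hmG, hmn⟩, hm⟩
      exact hdiag m hmG.1 n hn.1 hmn hm
    exact inter_mem (hCW n hn.2) (Ultrafilter.compl_mem_iff_notMem.2 this)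
  · rcases hne.lt_or_gt with h | h
    exacts [hE m hm n h, (hE n hn m h).symm]

theorem mem_sumUF {U : Ultrafilter ℕ} {V : ℕ → Ultrafilter ℕ} {X : Set (ℕ × ℕ)} :
    X ∈ sumUF U V ↔ {n | {m | (n, m) ∈ X} ∈ V n} ∈ U :=
  Iff.rfl

theorem mem_sumUF_of_mem {U : Ultrafilter ℕ} {V : ℕ → Ultrafilter ℕ} {G : Set ℕ} (hG : G ∈ U)
    {Y : ℕ → Set ℕ} (hY : ∀ n ∈ G, Y n ∈ V n) :
    {p : ℕ × ℕ | p.1 ∈ G ∧ p.2 ∈ Y p.1} ∈ sumUF U V :=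
  mem_sumUF.2 <| mem_of_superset hG fun n hn => mem_of_superset (hY n hn) fun _ hm => ⟨hn, hm⟩

section Sections

variable {U : Ultrafilter ℕ} {V : ℕ → Ultrafilter ℕ} {f : ℕ × ℕ → ℕ} {A : ℕ → Set ℕ}
  {S : Set ℕ}

theorem exists_injOn_of_injOn_sections (hU : IsSelective U)
    (hVV : ∀ m n, m ≠ n → ¬ RKIso (V m) (V n)) (hA : ∀ n, A n ∈ V n) (hS : S ∈ U)
    (hf : ∀ n ∈ S, InjOn (fun m => f (n, m)) (A n)) :
    ∃ X ∈ sumUF U V, InjOn f X := by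
  set W : ℕ → Ultrafilter ℕ := fun n => (V n).map fun m => f (n, m)
  have hiso : ∀ n ∈ S, RKIso (V n) (W n) := fun n hn =>
    (V n).rkIso_map_of_injOn (hA n) (hf n hn)
  have hW : InjOn W S := fun m hm n hn h => by_contra fun hne =>
    hVV m n hne ((hiso m hm).trans (h ▸ (hiso n hn).symm))
  obtain ⟨G, hG, E, hE, hdisj⟩ := hU.exists_pairwiseDisjoint W hS hW
  refine ⟨_, mem_sumUF_of_mem (inter_mem hG hS)
    (Y := fun n => A n ∩ (fun m => f (n, m)) ⁻¹' E n) fun n hn => inter_mem (hA n) (hE n hn.1), ?_⟩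
  rintro ⟨n, m⟩ ⟨hn, hm, hmE : f (n, m) ∈ E n⟩ ⟨n', m'⟩ ⟨hn', hm', hmE' : f (n', m') ∈ E n'⟩ heq
  rw [← heq] at hmE'
  obtain rfl : n = n' := hdisj.elim_set hn.1 hn'.1 _ hmE hmE'
  exact congrArg (Prod.mk n) (hf n hn.2 hm hm' heq)

theorem exists_eq_comp_fst_of_const_sections (hU : IsSelective U) (hA : ∀ n, A n ∈ V n)
    (hS : S ∈ U) {c : ℕ → ℕ} (hc : ∀ n ∈ S, ∀ m ∈ A n, f (n, m) = c n) :
    ∃ X ∈ sumUF U V, (∃ d, ∀ p ∈ X, f p = d) ∨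
      ∃ g : ℕ → ℕ, Injective g ∧ ∀ p ∈ X, f p = g p.1 := by
  obtain ⟨B, hB, hinj | ⟨d, hd⟩⟩ := hU c
  · obtain ⟨e, he⟩ := U.exists_equiv_eventuallyEq hB hinj
    refine ⟨_, mem_sumUF_of_mem (inter_mem hS he) fun n _ => hA n,
      Or.inr ⟨e, e.injective, ?_⟩⟩
    rintro ⟨n, m⟩ ⟨⟨hnS, hne⟩, hm⟩
    exact (hc n hnS m hm).trans hne.symm
  · refine ⟨_, mem_sumUF_of_mem (inter_mem hS hB) fun n _ => hA n, Or.inl ⟨d, ?_⟩⟩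
    rintro ⟨n, m⟩ ⟨⟨hnS, hnB⟩, hm⟩
    exact (hc n hnS m hm).trans (hd n hnB)

end Sections

theorem stmt2_general (U : Ultrafilter ℕ) (V : ℕ → Ultrafilter ℕ)
    (hUsel : IsSelective U) (hVsel : ∀ n, IsSelective (V n))
    (hVV : ∀ m n, m ≠ n → ¬ RKIso (V m) (V n))
    (f : ℕ × ℕ → ℕ) :
    ∃ X ∈ sumUF U V,
      (∃ c, ∀ p ∈ X, f p = c) ∨
      (∃ g : ℕ → ℕ, Function.Injective g ∧ ∀ p ∈ X, f p = g p.1) ∨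
      Set.InjOn f X := by
  choose A hA hAf using fun n => hVsel n fun m => f (n, m)
  by_cases hS : {n | InjOn (fun m => f (n, m)) (A n)} ∈ U
  · obtain ⟨X, hX, hinj⟩ := exists_injOn_of_injOn_sections hUsel hVV hA hS fun _ hn => hn
    exact ⟨X, hX, Or.inr (Or.inr hinj)⟩
  · have hconst : ∀ n ∈ {n | InjOn (fun m => f (n, m)) (A n)}ᶜ, ∃ c, ∀ m ∈ A n, f (n, m) = c :=
      fun n hn => (hAf n).resolve_left hn
    choose! c hc using hconst
    obtain ⟨X, hX, hX'⟩ := exists_eq_comp_fst_of_const_sections hUsel hA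
      (Ultrafilter.compl_mem_iff_notMem.2 hS) hc
    exact ⟨X, hX, hX'.imp_right Or.inl⟩

theorem stmt2 (U : Ultrafilter ℕ) (V : ℕ → Ultrafilter ℕ)
    (hUsel : IsSelective U) (hVsel : ∀ n, IsSelective (V n))
    (hUV : ∀ n, ¬ RKIso U (V n))
    (hVV : ∀ m n, m ≠ n → ¬ RKIso (V m) (V n))
    (f : ℕ × ℕ → ℕ) :
    ∃ X ∈ sumUF U V,
      (∃ c, ∀ p ∈ X, f p = c) ∨
      (∃ g : ℕ → ℕ, Function.Injective g ∧ ∀ p ∈ X, f p = g p.1) ∨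
      Set.InjOn f X :=
  stmt2_general U V hUsel hVsel hVV f
end

section
/- For every n ≥ 2, every ultrafilter on ℕ that is (n, T(n)−1)-weakly Ramsey is a P-point, where T(n) is the number of n-types. -/
/-- An `n`-type: a linear preorder (total preorder) on the `2n` variables
`x_1,…,x_n` (coded `Sum.inl i`) and `y_1,…,y_n` (coded `Sum.inr i`) such that
the `y_i` occur strictly in increasing order of subscripts, no `y_i` is
equivalent to any other variable (equality signs occur only between `x`'s),
and each `x_i` strictly precedes the corresponding `y_i`. -/
structure NType (n : ℕ) where
  le : Fin n ⊕ Fin n → Fin n ⊕ Fin n → Prop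
  refl : ∀ a, le a a
  trans : ∀ a b c, le a b → le b c → le a c
  total : ∀ a b, le a b ∨ le b a
  y_strict : ∀ i j : Fin n, i < j → le (Sum.inr i) (Sum.inr j) ∧ ¬ le (Sum.inr j) (Sum.inr i)
  y_alone : ∀ (i : Fin n) (v), le (Sum.inr i) v → le v (Sum.inr i) → v = Sum.inr i
  x_before_y : ∀ i : Fin n, le (Sum.inl i) (Sum.inr i) ∧ ¬ le (Sum.inr i) (Sum.inl i)

/-- `T n` is the number of `n`-types. -/
noncomputable def T (n : ℕ) : ℕ := Nat.card (NType n)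

/-- `W` is `(n,h)`-weakly Ramsey: for every partition of the `n`-element subsets
of `α` into finitely many pieces there is a set `A ∈ W` whose `n`-element subsets
meet at most `h` pieces. -/
def WeaklyRamsey {α : Type*} (W : Ultrafilter α) (n h : ℕ) : Prop :=
  ∀ (m : ℕ) (c : Finset α → Fin m),
    ∃ A ∈ W, {j : Fin m | ∃ s : Finset α, ↑s ⊆ A ∧ s.card = n ∧ c s = j}.ncard ≤ h

/-- `W` is a P-point: for every `f : α → ℕ` there is `A ∈ W` on which `f` is
finite-to-one or constant. -/
def IsPPoint {α : Type*} (W : Ultrafilter α) : Prop :=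
  ∀ f : α → ℕ, ∃ A ∈ W, (∀ k, {a ∈ A | f a = k}.Finite) ∨ (∃ c, ∀ a ∈ A, f a = c)

/-! If `f` witnesses that `W` is not a P-point, then every `A ∈ W` meets infinitely many fibres of
`f` in infinite sets: finitely many such fibres could be removed from `A` without leaving `W`, and
what remains would be a set in `W` on which `f` is finite-to-one. Colour an `n`-set
`{a₁ < ⋯ < aₙ}` by the order type of the values `f aᵢ` and `aᵢ`. For such an `A`, every `n`-type
is realized inside `A`, by choosing the values in increasing order: an `xᵢ` among the infinitely
many infinite fibres, and `yᵢ = aᵢ` far out in the fibre over the value of `xᵢ`. Hence every set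
in `W` sees all `T n` colours. -/

open Finset

theorem Fintype.exists_rank_le_iff {α : Type*} [Fintype α] (r : α → α → Prop)
    (htrans : ∀ a b c, r a b → r b c → r a c) (htotal : ∀ a b, r a b ∨ r b a) :
    ∃ rk : α → ℕ, (∀ a b, rk a ≤ rk b ↔ r a b) ∧ ∀ a, rk a < Fintype.card α := by
  classical
  refine ⟨fun a => #{c | ¬ r a c}, fun a b => ⟨fun hle => ?_, fun hab => ?_⟩, fun a => ?_⟩
  · by_contra hab
    have hba : r b a := (htotal a b).resolve_left hab
    refine absurd hle (not_le.mpr (card_lt_card ⟨fun c hc => ?_, fun hsub => ?_⟩))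
    · simp only [mem_filter, mem_univ, true_and] at hc ⊢
      exact fun hac => hc (htrans b a c hba hac)
    · have := hsub (mem_filter.mpr ⟨mem_univ b, hab⟩)
      simp only [mem_filter, mem_univ, true_and] at this
      exact this ((htotal b b).elim id id)
  · refine card_le_card fun c hc => ?_
    simp only [mem_filter, mem_univ, true_and] at hc ⊢
    exact fun hbc => hc (htrans a b c hab hbc)
  · refine card_lt_card ⟨subset_univ _, fun hsub => ?_⟩
    have := hsub (mem_univ a)
    simp only [mem_filter, mem_univ, true_and] at this
    exact this ((htotal a a).elim id id)

theorem exists_strictMonoOn_forall_mem (S : ℕ → (ℕ → ℕ) → Set ℕ)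
    (hloc : ∀ ρ g g', (∀ ρ' < ρ, g ρ' = g' ρ') → S ρ g = S ρ g')
    (hS : ∀ ρ g, (∀ ρ' < ρ, g ρ' ∈ S ρ' g) → (S ρ g).Infinite) (N : ℕ) :
    ∃ g : ℕ → ℕ, StrictMonoOn g (Set.Iio N) ∧ ∀ ρ < N, g ρ ∈ S ρ g := by
  induction N with
  | zero => exact ⟨id, strictMono_id.strictMonoOn _, by simp⟩
  | succ N ih =>
    obtain ⟨g, hmono, hmem⟩ := ih
    obtain ⟨m, hmS, hm⟩ := (hS N g hmem).exists_gt ((range N).sup g)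
    have hagree : ∀ ρ < N, Function.update g N m ρ = g ρ := fun ρ h =>
      Function.update_of_ne h.ne _ _
    have hS_update : ∀ ρ ≤ N, S ρ (Function.update g N m) = S ρ g := fun ρ hρ =>
      hloc ρ _ _ fun ρ' h => hagree ρ' (by omega)
    refine ⟨Function.update g N m, fun ρ₁ h₁ ρ₂ h₂ h₁₂ => ?_, fun ρ hρ => ?_⟩
    · simp only [Set.mem_Iio] at h₁ h₂
      rw [hagree ρ₁ (by omega)]
      rcases (Nat.lt_succ_iff_lt_or_eq.mp h₂) with h₂ | rfl
      · rw [hagree ρ₂ h₂]; exact hmono (show ρ₁ < N by omega) h₂ h₁₂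
      · rw [Function.update_self]
        exact (le_sup (mem_range.mpr h₁₂)).trans_lt hm
    · rw [hS_update ρ (by omega)]
      rcases (Nat.lt_succ_iff_lt_or_eq.mp hρ) with hρ | rfl
      · rw [hagree ρ hρ]; exact hmem ρ hρ
      · rwa [Function.update_self]

namespace NType

variable {n : ℕ}

theorem ext_le {τ₁ τ₂ : NType n} (h : τ₁.le = τ₂.le) : τ₁ = τ₂ := by
  cases τ₁; cases τ₂; simp_all

instance : Finite (NType n) :=
  Finite.of_injective (fun τ => τ.le) fun _ _ => ext_le

/-- Values are doubled, and incremented at the `y`'s, so that a tie `xⱼ = yᵢ` becomes `xⱼ < yᵢ`. -/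
def ofSeq (a b : Fin n → ℕ) (ha : StrictMono a) (hb : ∀ i, b i ≤ a i) : NType n where
  le u w := Sum.elim (2 * b ·) (2 * a · + 1) u ≤ Sum.elim (2 * b ·) (2 * a · + 1) w
  refl _ := le_rfl
  trans _ _ _ := le_trans
  total _ _ := le_total _ _
  y_strict i j hij := by have := ha hij; simp only [Sum.elim_inr]; omega
  y_alone i v h₁ h₂ := by
    cases v with
    | inl j => simp only [Sum.elim_inl, Sum.elim_inr] at h₁ h₂; omega
    | inr j =>
      simp only [Sum.elim_inr] at h₁ h₂
      rw [ha.injective (by omega : a j = a i)]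
  x_before_y i := by have := hb i; simp only [Sum.elim_inl, Sum.elim_inr]; omega

instance : Nonempty (NType n) :=
  ⟨ofSeq Fin.val 0 Fin.val_strictMono fun _ => Nat.zero_le _⟩

end NType

/-- The type of `{a₁ < ⋯ < aₙ}` with `yᵢ = aᵢ` and `xᵢ = min (f aᵢ) aᵢ`, clamped so that `xᵢ`
precedes `yᵢ`. -/
noncomputable def typeOf (n : ℕ) (f : ℕ → ℕ) (s : Finset ℕ) : NType n :=
  if h : #s = n then
    NType.ofSeq (s.orderEmbOfFin h) (fun i => min (f (s.orderEmbOfFin h i)) (s.orderEmbOfFin h i))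
      (s.orderEmbOfFin h).strictMono fun _ => min_le_right _ _
  else Classical.arbitrary _

theorem typeOf_image {n : ℕ} (f : ℕ → ℕ) {a : Fin n → ℕ} (ha : StrictMono a) :
    typeOf n f (univ.image a) =
      NType.ofSeq a (fun i => min (f (a i)) (a i)) ha fun _ => min_le_right _ _ := by
  have hcard : #(univ.image a) = n := by
    rw [card_image_of_injective _ ha.injective, card_univ, Fintype.card_fin]
  have hemb : ⇑((univ.image a).orderEmbOfFin hcard) = a :=
    ((univ.image a).orderEmbOfFin_unique hcard (fun i => mem_image_of_mem _ (mem_univ i)) ha).symm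
  rw [typeOf, dif_pos hcard]
  apply NType.ext_le
  simp only [NType.ofSeq, hemb]

theorem typeOf_image_eq {n : ℕ} {f : ℕ → ℕ} (τ : NType n) {φ : Fin n ⊕ Fin n → ℕ}
    (hφ : ∀ u w, φ u ≤ φ w ↔ τ.le u w) (hf : ∀ i, f (φ (.inr i)) = φ (.inl i)) :
    #(univ.image (φ ∘ .inr)) = n ∧ typeOf n f (univ.image (φ ∘ .inr)) = τ := by
  have hlt : ∀ u w, φ u < φ w ↔ ¬ τ.le w u := fun u w => by rw [← hφ, not_le]
  have ha : StrictMono (φ ∘ .inr) := fun i j hij => (hlt _ _).mpr (τ.y_strict i j hij).2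
  have hxy : ∀ i, φ (.inl i) < φ (.inr i) := fun i => (hlt _ _).mpr (τ.x_before_y i).2
  have hy : ∀ i v, φ v = φ (.inr i) → v = .inr i := fun i v h =>
    τ.y_alone i v ((hφ _ _).mp h.ge) ((hφ _ _).mp h.le)
  refine ⟨by rw [card_image_of_injective _ ha.injective, card_univ, Fintype.card_fin], ?_⟩
  rw [typeOf_image f ha]
  apply NType.ext_le
  funext u w
  apply propext
  simp only [NType.ofSeq, Function.comp_apply, hf, min_eq_left (hxy _).le, ← hφ]
  rcases lt_trichotomy (φ u) (φ w) with h | h | h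
  · cases u <;> cases w <;> simp only [Sum.elim_inl, Sum.elim_inr] <;> omega
  · cases u with
    | inl i => cases w with
      | inl j => simp only [Sum.elim_inl]; omega
      | inr j => exact absurd (hy j _ h) Sum.inl_ne_inr
    | inr i => rw [← hy i w h.symm]; exact iff_of_true le_rfl le_rfl
  · cases u <;> cases w <;> simp only [Sum.elim_inl, Sum.elim_inr] <;> omega

theorem Ultrafilter.infinite_setOf_infinite_fiber {α : Type*} {W : Ultrafilter α} {f : α → ℕ}
    (hfib : ∀ k, f ⁻¹' {k} ∉ W) (hfin : ∀ A ∈ W, ∃ k, {a ∈ A | f a = k}.Infinite)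
    {A : Set α} (hA : A ∈ W) : {k | {a ∈ A | f a = k}.Infinite}.Infinite := by
  intro hI
  have hout : (⋃ k ∈ {k | {a ∈ A | f a = k}.Infinite}, f ⁻¹' {k}) ∉ W := by
    rw [Ultrafilter.finite_biUnion_mem_iff hI]
    rintro ⟨k, -, hk⟩
    exact hfib k hk
  obtain ⟨k, hk⟩ := hfin _ (Filter.inter_mem hA (Ultrafilter.compl_mem_iff_notMem.mpr hout))
  have hkI : {a ∈ A | f a = k}.Infinite := hk.mono fun _ ha => ⟨ha.1.1, ha.2⟩
  obtain ⟨a, ⟨-, hcompl⟩, hfa⟩ := hk.nonempty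
  exact hcompl (Set.mem_biUnion hkI hfa)

theorem NType.exists_embedding_of_infinite {n : ℕ} (τ : NType n) (f : ℕ → ℕ) {A : Set ℕ}
    (hA : {k | {a ∈ A | f a = k}.Infinite}.Infinite) :
    ∃ φ : Fin n ⊕ Fin n → ℕ, (∀ u w, φ u ≤ φ w ↔ τ.le u w) ∧
      ∀ i, φ (.inr i) ∈ A ∧ f (φ (.inr i)) = φ (.inl i) := by
  obtain ⟨rk, hrk, hbound⟩ := Fintype.exists_rank_le_iff τ.le τ.trans τ.total
  have hxy : ∀ i, rk (.inl i) < rk (.inr i) := fun i => by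
    rw [← not_le, hrk]; exact (τ.x_before_y i).2
  have hy : ∀ i v, rk v = rk (.inr i) → v = .inr i := fun i v h =>
    τ.y_alone i v ((hrk _ _).mp h.ge) ((hrk _ _).mp h.le)
  -- Rank classes are filled in increasing order: an `x`-class gets a value whose fibre in `A` is
  -- infinite, so that `yᵢ` can then be taken in that fibre above everything chosen before.
  let S : ℕ → (ℕ → ℕ) → Set ℕ := fun ρ g => {m | ∀ v, rk v = ρ →
    Sum.elim (fun _ => m ∈ {k | {a ∈ A | f a = k}.Infinite})
      (fun i => m ∈ A ∧ f m = g (rk (.inl i))) v}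
  have hloc : ∀ ρ g g', (∀ ρ' < ρ, g ρ' = g' ρ') → S ρ g = S ρ g' := by
    intro ρ g g' h
    ext m
    refine forall_congr' fun v => forall_congr' fun hv => ?_
    cases v with
    | inl i => rfl
    | inr i => simp only [Sum.elim_inr, h _ (hv ▸ hxy i)]
  have hS : ∀ ρ g, (∀ ρ' < ρ, g ρ' ∈ S ρ' g) → (S ρ g).Infinite := by
    intro ρ g hprev
    by_cases hρ : ∃ i, rk (.inr i) = ρ
    · obtain ⟨i, rfl⟩ := hρ
      refine (hprev _ (hxy i) (.inl i) rfl).mono fun m hm v hv => ?_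
      rw [hy i v hv]
      exact hm
    · refine hA.mono fun m hm v hv => ?_
      cases v with
      | inl i => exact hm
      | inr i => exact absurd ⟨i, hv⟩ hρ
  obtain ⟨g, hg, hgS⟩ := exists_strictMonoOn_forall_mem S hloc hS (Fintype.card (Fin n ⊕ Fin n))
  exact ⟨g ∘ rk, fun u w => (hg.le_iff_le (hbound u) (hbound w)).trans (hrk u w),
    fun i => hgS _ (hbound _) (.inr i) rfl⟩

theorem NType.exists_typeOf_eq {n : ℕ} (τ : NType n) (f : ℕ → ℕ) {A : Set ℕ}
    (hA : {k | {a ∈ A | f a = k}.Infinite}.Infinite) :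
    ∃ s : Finset ℕ, ↑s ⊆ A ∧ #s = n ∧ typeOf n f s = τ := by
  obtain ⟨φ, hφ, hφA⟩ := τ.exists_embedding_of_infinite f hA
  refine ⟨univ.image (φ ∘ .inr), ?_, typeOf_image_eq τ hφ fun i => (hφA i).2⟩
  simpa [Set.subset_def] using fun i => (hφA i).1

theorem stmt6_general (n : ℕ) (W : Ultrafilter ℕ)
    (h : WeaklyRamsey W n (T n - 1)) : IsPPoint W := by
  intro f
  by_contra hf
  push Not at hf
  have hfib : ∀ k, f ⁻¹' {k} ∉ W := fun k hk =>
    let ⟨a, ha, hne⟩ := (hf _ hk).2 k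
    hne ha
  let e : NType n ≃ Fin (T n) := Finite.equivFin _
  obtain ⟨A, hA, hle⟩ := h (T n) (e ∘ typeOf n f)
  have hA' := Ultrafilter.infinite_setOf_infinite_fiber hfib (fun A hA => (hf A hA).1) hA
  have hall : {j | ∃ s : Finset ℕ, ↑s ⊆ A ∧ #s = n ∧ (e ∘ typeOf n f) s = j} = Set.univ :=
    Set.eq_univ_of_forall fun j => by
      obtain ⟨s, hsA, hs, hτ⟩ := (e.symm j).exists_typeOf_eq f hA'
      exact ⟨s, hsA, hs, by simp [hτ]⟩
  rw [hall, Set.ncard_univ, Nat.card_eq_fintype_card, Fintype.card_fin] at hle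
  have : 0 < T n := Nat.card_pos
  omega

theorem stmt6 (n : ℕ) (hn : 2 ≤ n) (W : Ultrafilter ℕ)
    (h : WeaklyRamsey W n (T n - 1)) : IsPPoint W :=
  stmt6_general n W h
end

section
/- For every sequence (A_k)_{k∈ℕ} of sets in (F⊗F)^+ such that A_{k+1} \ A_k ∈ (F⊗F)* for every k (i.e., the sequence is decreasing modulo F⊗F), there exists B ∈ (F⊗F)^+ such that B \ A_k ∈ (F⊗F)* for every k. That is, the quotient P(ℕ×ℕ)/(F⊗F) is countably closed. -/
/-- The `n`-th vertical section of `X ⊆ ℕ × ℕ`. -/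
def sect (X : Set (ℕ × ℕ)) (n : ℕ) : Set ℕ := {m | (n, m) ∈ X}

/-- Membership in the Fubini square `F ⊗ F` of the Fréchet filter: for all but
finitely many `n`, the vertical section `X(n)` is cofinite. -/
def MemFubini (X : Set (ℕ × ℕ)) : Prop := {n | ¬ (sect X n)ᶜ.Finite}.Finite

/-- The dual ideal `(F ⊗ F)*`: complements of members of `F ⊗ F`. -/
def FubiniStar (X : Set (ℕ × ℕ)) : Prop := MemFubini Xᶜ

/-- The coideal `(F ⊗ F)⁺`: sets not in the dual ideal, equivalently sets with
infinitely many infinite vertical sections. -/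
def FubiniPlus (X : Set (ℕ × ℕ)) : Prop := ¬ FubiniStar X

/-!
Choose columns `n₀ < n₁ < ⋯` such that the section `A_k(n_k)` is infinite and `n_k` avoids the
finitely many columns where some `A_{i+1} \ A_i` with `i < k` has an infinite section; let `B`
consist of the sections `A_k(n_k)` placed over the columns `n_k`. Then `B` has infinitely many
infinite sections, and for `k ≥ j` the section `A_k(n_k) \ A_j(n_k)` is covered by the finitely
many finite sets `(A_{i+1} \ A_i)(n_k)`, `j ≤ i < k`, so `B \ A_j` has an infinite section at most
in the columns `n_0, …, n_{j-1}`.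
-/

open Set Function

lemma sect_diff (X Y : Set (ℕ × ℕ)) (n : ℕ) : sect (X \ Y) n = sect X n \ sect Y n := rfl

lemma sect_compl (X : Set (ℕ × ℕ)) (n : ℕ) : sect Xᶜ n = (sect X n)ᶜ := rfl

lemma fubiniStar_iff (X : Set (ℕ × ℕ)) :
    FubiniStar X ↔ {n | (sect X n).Infinite}.Finite := by
  simp only [FubiniStar, MemFubini, sect_compl, compl_compl, Set.Infinite]

lemma fubiniPlus_iff (X : Set (ℕ × ℕ)) :
    FubiniPlus X ↔ {n | (sect X n).Infinite}.Infinite :=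
  (fubiniStar_iff X).not

lemma sect_iUnion_singleton_prod {ι : Type*} {f : ι → ℕ} (hf : Injective f) (S : ι → Set ℕ)
    (k : ι) : sect (⋃ i, {f i} ×ˢ S i) (f k) = S k := by
  ext m
  simp [sect, hf.eq_iff]

lemma sect_iUnion_singleton_prod_of_notMem_range {ι : Type*} {f : ι → ℕ} (S : ι → Set ℕ)
    {n : ℕ} (hn : n ∉ range f) : sect (⋃ i, {f i} ×ˢ S i) n = ∅ := by
  ext m
  simp only [sect, mem_iUnion, mem_prod, mem_singleton_iff, mem_ofPred_eq, mem_empty_iff_false,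
    iff_false, not_exists, not_and]
  exact fun i hi => absurd ⟨i, hi.symm⟩ hn

lemma finite_diff_of_finite_diff_succ {α : Type*} {s : ℕ → Set α} {j k : ℕ} (hjk : j ≤ k)
    (h : ∀ i, j ≤ i → i < k → (s (i + 1) \ s i).Finite) : (s k \ s j).Finite := by
  induction k, hjk using Nat.le_induction with
  | base => simp
  | succ k hjk ih =>
    have hk := h k hjk k.lt_succ_self
    have hkj := ih fun i hji hik => h i hji (hik.trans k.lt_succ_self)
    exact (hk.union hkj).subset (sdiff_triangle _ (s k) _)

lemma exists_strictMono_forall_mem {G : ℕ → Set ℕ} (hG : ∀ k, (G k).Infinite) :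
    ∃ f : ℕ → ℕ, StrictMono f ∧ ∀ k, f k ∈ G k :=
  Filter.extraction_forall_of_frequently fun k => Nat.frequently_atTop_iff_infinite.2 (hG k)

theorem stmt10 (A : ℕ → Set (ℕ × ℕ))
    (hplus : ∀ k, FubiniPlus (A k))
    (hdec : ∀ k, FubiniStar (A (k + 1) \ A k)) :
    ∃ B : Set (ℕ × ℕ), FubiniPlus B ∧ ∀ k, FubiniStar (B \ A k) := by
  set bad : ℕ → Set ℕ := fun i => {n | (sect (A (i + 1) \ A i) n).Infinite}
  have hgood : ∀ k, ({n | (sect (A k) n).Infinite} \ ⋃ i < k, bad i).Infinite := fun k =>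
    ((fubiniPlus_iff _).1 (hplus k)).sdiff
      ((finite_lt_nat k).biUnion fun i _ => (fubiniStar_iff _).1 (hdec i))
  obtain ⟨f, hf, hfk⟩ := exists_strictMono_forall_mem hgood
  have hsect := sect_iUnion_singleton_prod hf.injective fun k => sect (A k) (f k)
  refine ⟨⋃ k, {f k} ×ˢ sect (A k) (f k), ?_, fun j => ?_⟩
  · rw [fubiniPlus_iff]
    refine (infinite_range_of_injective hf.injective).mono ?_
    rintro _ ⟨k, rfl⟩
    simpa only [mem_ofPred_eq, hsect] using (hfk k).1
  · rw [fubiniStar_iff]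
    refine ((finite_lt_nat j).image f).subset fun n hn => ?_
    by_cases hn' : n ∈ range f
    · obtain ⟨k, rfl⟩ := hn'
      refine ⟨k, show k < j from not_le.1 fun hjk => hn ?_, rfl⟩
      rw [sect_diff, hsect]
      refine finite_diff_of_finite_diff_succ (s := fun i => sect (A i) (f k)) hjk fun i _ hik => ?_
      by_contra hinf
      exact (hfk k).2 (mem_biUnion hik hinf)
    · simp [sect_diff, sect_iUnion_singleton_prod_of_notMem_range _ hn'] at hn
end
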